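/- arXiv:1512.01615 — 6 statements merged into one kernel-verified Lean document; each statement's English description precedes it below -/
import Mathlib

section
/- For the congruence network G(r,N) with r ≥ 1, for every integer k ≥ 1 such that r·(k+1) ≤ N − r, the number of nodes m with r < m ≤ N whose out-degree equals k is exactly ⌊(N−r)/k⌋ − ⌊(N−r)/(k+1)⌋. -/
/-!
The out-degree of a node `m > r` is `⌊(N - r)/m⌋`: its successors are exactly `r + q m` with
`1 ≤ q ≤ ⌊(N - r)/m⌋` (here `r ≥ 1` is needed, so that `q = 1` already gives a node `> m`).
For `k ≥ 1`, `⌊n/m⌋ = k` holds exactly for `m` in the interval `(⌊n/(k+1)⌋, ⌊n/k⌋]`, and the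
hypothesis `r (k + 1) ≤ N - r` places that whole interval, for `n = N - r`, inside `(r, N]`.
-/

open Finset

namespace Nat

theorem card_filter_Ioc_mod_eq {r m : ℕ} (N : ℕ) (hr : 0 < r) (hrm : r < m) :
    #{j ∈ Ioc m N | j % m = r} = (N - r) / m := by
  have hm : 0 < m := hr.trans hrm
  have himage : {j ∈ Ioc m N | j % m = r} = (Icc 1 ((N - r) / m)).image (fun q => q * m + r) := by
    ext j
    simp only [mem_filter, mem_Ioc, mem_image, mem_Icc, Nat.le_div_iff_mul_le hm]
    constructor
    · rintro ⟨⟨hmj, hjN⟩, hjr⟩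
      have hj := Nat.div_add_mod j m
      rw [hjr, Nat.mul_comm] at hj
      exact ⟨j / m, ⟨Nat.div_pos hmj.le hm, by omega⟩, by omega⟩
    · rintro ⟨q, ⟨hq, hqN⟩, rfl⟩
      have : m ≤ q * m := Nat.le_mul_of_pos_left m hq
      refine ⟨⟨by omega, by omega⟩, ?_⟩
      rw [Nat.mul_add_mod_self_right, Nat.mod_eq_of_lt hrm]
  rw [himage, Finset.card_image_of_injective _ fun a b h =>
    Nat.eq_of_mul_eq_mul_right hm (by simpa using h), Nat.card_Icc, Nat.add_sub_cancel]

theorem div_eq_iff_mem_Ioc {n m k : ℕ} (hk : 0 < k) :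
    n / m = k ↔ m ∈ Ioc (n / (k + 1)) (n / k) := by
  rcases m.eq_zero_or_pos with rfl | hm
  · simp only [Nat.div_zero, mem_Ioc, Nat.not_lt_zero, false_and, iff_false]
    exact hk.ne
  rw [mem_Ioc, Nat.div_lt_iff_lt_mul (Nat.succ_pos k), Nat.le_div_iff_mul_le hk, mul_comm m,
    mul_comm m, ← Nat.div_lt_iff_lt_mul hm, ← Nat.le_div_iff_mul_le hm]
  omega

theorem filter_Ioc_div_eq {n k a b : ℕ} (hk : 0 < k) (ha : a ≤ n / (k + 1)) (hb : n / k ≤ b) :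
    {m ∈ Ioc a b | n / m = k} = Ioc (n / (k + 1)) (n / k) := by
  ext m
  rw [mem_filter, div_eq_iff_mem_Ioc hk, and_iff_right_of_imp (Ioc_subset_Ioc ha hb ·)]

end Nat

theorem congruence_network_degree_count_general (r N : ℕ) (hr : 1 ≤ r)
    (k : ℕ) (hk : 1 ≤ k) (hkN : r * (k + 1) ≤ N - r) :
    ((Finset.Ioc r N).filter
        (fun m => ((Finset.Ioc m N).filter (fun j => j % m = r)).card = k)).card
      = (N - r) / k - (N - r) / (k + 1) := by
  have hdeg : {m ∈ Ioc r N | #{j ∈ Ioc m N | j % m = r} = k} = {m ∈ Ioc r N | (N - r) / m = k} :=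
    filter_congr fun m hm => by rw [Nat.card_filter_Ioc_mod_eq N hr (mem_Ioc.mp hm).1]
  have hlow : r ≤ (N - r) / (k + 1) := (Nat.le_div_iff_mul_le k.succ_pos).mpr hkN
  have hhigh : (N - r) / k ≤ N := (Nat.div_le_self _ _).trans (Nat.sub_le N r)
  rw [hdeg, Nat.filter_Ioc_div_eq hk hlow hhigh, Nat.card_Ioc]

/-- In the congruence network `G(r,N)` with `r ≥ 1`, for every `k ≥ 1` with
`r·(k+1) ≤ N − r`, the number of nodes whose out-degree equals `k` is exactly
`⌊(N−r)/k⌋ − ⌊(N−r)/(k+1)⌋`. -/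
theorem congruence_network_degree_count (r N : ℕ) (hr : 1 ≤ r) (hN : r < N)
    (k : ℕ) (hk : 1 ≤ k) (hkN : r * (k + 1) ≤ N - r) :
    ((Finset.Ioc r N).filter
        (fun m => ((Finset.Ioc m N).filter (fun j => j % m = r)).card = k)).card
      = (N - r) / k - (N - r) / (k + 1) :=
  congruence_network_degree_count_general r N hr k hk hkN
end

section
/- For fixed k ≥ 0, the fraction of nodes of the divisibility network G(0,N) whose out-degree equals k, i.e. (1/N) · #{m : 1 ≤ m ≤ N, out-degree of m equals k}, converges to 1/((k+1)(k+2)) as N → ∞. -/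
/-!
The out-degree of `m ≤ N` is the number of proper multiples of `m` up to `N`, namely `N / m - 1`.
So it equals `k` exactly when `N / m = k + 1`, i.e. when `N / (k + 2) < m ≤ N / (k + 1)`, and the
proportion of such `m` is `(N / (k + 1) - N / (k + 2)) / N → 1 / (k + 1) - 1 / (k + 2)`.
-/

open Filter Finset Topology

theorem Nat.card_filter_dvd_Ioc (a b d : ℕ) : #{x ∈ Ioc a b | d ∣ x} = b / d - a / d := by
  rcases le_total a b with hab | hba
  · have hsplit :
        ({x ∈ Ioc 0 a | d ∣ x} : Finset ℕ) ∪ {x ∈ Ioc a b | d ∣ x} =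
          {x ∈ Ioc 0 b | d ∣ x} := by
      rw [← filter_union, Ioc_union_Ioc_eq_Ioc a.zero_le hab]
    have hdisj : Disjoint ({x ∈ Ioc 0 a | d ∣ x} : Finset ℕ) {x ∈ Ioc a b | d ∣ x} :=
      disjoint_filter_filter (Ioc_disjoint_Ioc_of_le le_rfl)
    have := card_union_of_disjoint hdisj
    rw [hsplit, Nat.Ioc_filter_dvd_card_eq_div, Nat.Ioc_filter_dvd_card_eq_div] at this
    omega
  · rw [Ioc_eq_empty_of_le hba, filter_empty, card_empty,
      Nat.sub_eq_zero_of_le (Nat.div_le_div_right hba)]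

theorem Nat.div_eq_iff_div_succ_lt_and_le_div {n m q : ℕ} (hm : 0 < m) (hq : 0 < q) :
    n / m = q ↔ n / (q + 1) < m ∧ m ≤ n / q := by
  rw [Nat.div_lt_iff_lt_mul q.succ_pos, Nat.le_div_iff_mul_le hq, mul_comm m, mul_comm m,
    ← Nat.div_lt_iff_lt_mul hm, ← Nat.le_div_iff_mul_le hm]
  omega

theorem tendsto_natDiv_div_atTop (d : ℕ) :
    Tendsto (fun n : ℕ => ((n / d : ℕ) : ℝ) / n) atTop (𝓝 (1 / d)) := by
  have := (tendsto_nat_floor_mul_div_atTop (a := (1 / d : ℝ)) (by positivity)).comp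
    tendsto_natCast_atTop_atTop
  refine this.congr fun n => ?_
  rw [Function.comp_apply, one_div_mul_eq_div, Nat.floor_div_eq_div]

theorem filter_Icc_card_filter_dvd_Ioc_eq (N k : ℕ) :
    {m ∈ Icc 1 N | #{j ∈ Ioc m N | m ∣ j} = k} = Ioc (N / (k + 2)) (N / (k + 1)) := by
  ext m
  simp only [mem_filter, mem_Icc, mem_Ioc, Nat.card_filter_dvd_Ioc]
  constructor
  · rintro ⟨⟨hm, hmN⟩, hk⟩
    have : 0 < N / m := Nat.div_pos hmN hm
    rw [Nat.div_self hm] at hk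
    exact (Nat.div_eq_iff_div_succ_lt_and_le_div hm k.succ_pos).1 (by omega)
  · intro hmem
    have hm : 0 < m := (Nat.zero_le _).trans_lt hmem.1
    have hq := (Nat.div_eq_iff_div_succ_lt_and_le_div hm k.succ_pos).2 hmem
    have hmN : m ≤ N := (Nat.div_pos_iff.1 (by omega)).2
    rw [Nat.div_self hm]
    omega

/-- For fixed `k ≥ 0`, the fraction of nodes of the divisibility network `G(0,N)` with
out-degree `k` converges to `1/((k+1)(k+2))` as `N → ∞`. -/
theorem divisibility_network_degree_distribution (k : ℕ) :
    Tendsto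
      (fun N : ℕ =>
        (((Finset.Icc 1 N).filter
            (fun m => ((Finset.Ioc m N).filter (fun j => m ∣ j)).card = k)).card : ℝ)
          / (N : ℝ))
      atTop (nhds (1 / (((k : ℝ) + 1) * ((k : ℝ) + 2)))) := by
  have hlim : (1 : ℝ) / ((k + 1 : ℕ) : ℝ) - 1 / ((k + 2 : ℕ) : ℝ)
      = 1 / (((k : ℝ) + 1) * ((k : ℝ) + 2)) := by
    push_cast
    field_simp
    ring
  refine hlim ▸ ((tendsto_natDiv_div_atTop (k + 1)).sub (tendsto_natDiv_div_atTop (k + 2))).congr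
    fun N => ?_
  rw [filter_Icc_card_filter_dvd_Ioc_eq, Nat.card_Ioc,
    Nat.cast_sub (Nat.div_le_div_left (by omega) (by omega)), sub_div]
end

section
/- For fixed r ≥ 1, the average out-degree of the congruence network G(r,N), namely k̄(N) = (1/(N−r)) ∑_{m=r+1}^{N} ⌊(N−r)/m⌋, satisfies k̄(N) − log(N−r) → 2γ − 1 − ∑_{i=1}^{r} 1/i as N → ∞, where γ is the Euler–Mascheroni constant. In particular the average degree grows logarithmically with the network size. -/
/-!
Dirichlet's hyperbola method: counting the lattice points under `b * m = n` from both axes up to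
`s = ⌊√n⌋` gives `∑_{m ≤ n} ⌊n/m⌋ = 2 ∑_{m ≤ s} ⌊n/m⌋ - s²`, and the short sum is
`n H_s + O(s)`. Since `H_s - log s → γ` and `s² / n → 1`, dividing by `n` yields
`∑_{m ≤ n} ⌊n/m⌋ / n - log n → 2γ - 1`. With `n = N - r`, the degree sum of `G(r, N)` is this
divisor sum minus the first `r` terms, and `⌊n/m⌋ / n → 1/m` for each of them.
-/

open Filter Finset Real Topology

namespace Nat

theorem sum_Icc_one_add_sum_Ioc {M : Type*} [AddCommMonoid M] (f : ℕ → M) {a b : ℕ}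
    (hab : a ≤ b) : ∑ m ∈ Icc 1 a, f m + ∑ m ∈ Ioc a b, f m = ∑ m ∈ Icc 1 b, f m := by
  have h := sum_Ioc_consecutive f a.zero_le hab
  rwa [← Icc_add_one_left_eq_Ioc 0, ← Icc_add_one_left_eq_Ioc 0] at h

theorem sum_Icc_div_of_le {n N : ℕ} (h : n ≤ N) :
    ∑ m ∈ Icc 1 N, n / m = ∑ m ∈ Icc 1 n, n / m :=
  (sum_subset (Icc_subset_Icc_right h) fun m hmN hmn =>
    Nat.div_eq_of_lt (by simp only [mem_Icc] at hmN hmn; omega)).symm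

/-- Both sides count the pairs `(b, m)` with `1 ≤ b`, `s < m` and `b * m ≤ n`; the bound on `n`
forces `b ≤ s` for every such pair. -/
theorem sum_Ioc_div_eq_sum_Icc_div_sub {n s : ℕ} (hn : n < (s + 1) ^ 2) :
    ∑ m ∈ Ioc s n, n / m = ∑ b ∈ Icc 1 s, (n / b - s) := by
  have hswap : ∀ m b, m ∈ Ioc s n ∧ b ∈ Icc 1 (n / m) ↔ m ∈ Ioc s (n / b) ∧ b ∈ Icc 1 s := by
    intro m b
    simp only [mem_Ioc, mem_Icc]
    constructor
    · rintro ⟨⟨hsm, -⟩, hb, hbm⟩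
      have hbm' : b * m ≤ n := (Nat.le_div_iff_mul_le (by omega)).mp hbm
      refine ⟨⟨hsm, (Nat.le_div_iff_mul_le hb).mpr (by rwa [mul_comm])⟩, hb, ?_⟩
      by_contra! hsb
      nlinarith
    · rintro ⟨⟨hsm, hmb⟩, hb, -⟩
      have hmb' : m * b ≤ n := (Nat.le_div_iff_mul_le hb).mp hmb
      exact ⟨⟨hsm, hmb.trans (Nat.div_le_self n b)⟩, hb,
        (Nat.le_div_iff_mul_le (by omega)).mpr (by rwa [mul_comm])⟩
  have hcount := sum_comm' hswap (f := fun _ _ => 1)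
  simpa only [sum_const, smul_eq_mul, mul_one, card_Icc, card_Ioc, Nat.add_sub_cancel]
    using hcount

theorem sum_Icc_div_add_sqrt_mul_sqrt (n : ℕ) :
    ∑ m ∈ Icc 1 n, n / m + sqrt n * sqrt n = 2 * ∑ m ∈ Icc 1 (sqrt n), n / m := by
  set s := sqrt n
  have hs_le : ∀ b ∈ Icc 1 s, s ≤ n / b := fun b hb =>
    (Nat.le_div_iff_mul_le (mem_Icc.1 hb).1).mpr
      ((Nat.mul_le_mul_left s (mem_Icc.1 hb).2).trans (sqrt_le n))
  have hsq : s * s = ∑ _b ∈ Icc 1 s, s := by simp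
  rw [← sum_Icc_one_add_sum_Ioc _ (sqrt_le_self n),
    sum_Ioc_div_eq_sum_Icc_div_sub (lt_succ_sqrt' n), add_assoc, hsq, ← sum_add_distrib,
    sum_congr rfl fun b hb => Nat.sub_add_cancel (hs_le b hb), two_mul]

theorem tendsto_sqrt_atTop : Tendsto sqrt atTop atTop :=
  tendsto_atTop_atTop_of_monotone (fun _ _ => sqrt_le_sqrt) fun b => ⟨b ^ 2, (sqrt_eq' b).ge⟩

theorem abs_cast_div_sub_div_lt_one {K : Type*} [Field K] [LinearOrder K]
    [IsStrictOrderedRing K] [FloorSemiring K] (n m : ℕ) : |((n / m : ℕ) : K) - n / m| < 1 := by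
  rw [abs_sub_lt_iff]
  constructor
  · linarith [cast_div_le (α := K) (m := n) (n := m)]
  · linarith [floor_div_eq_div (K := K) n m ▸ lt_floor_add_one ((n : K) / m)]

theorem abs_cast_div_div_sub_one_div_le {n : ℕ} (hn : 0 < n) (m : ℕ) :
    |((n / m : ℕ) : ℝ) / n - 1 / m| ≤ 1 / n := by
  have hn' : (0 : ℝ) < n := cast_pos.mpr hn
  have h1m : (1 : ℝ) / m = n / m / n := by rw [div_right_comm, div_self hn'.ne']
  rw [h1m, ← sub_div, abs_div, abs_of_pos hn']
  exact div_le_div_of_nonneg_right (abs_cast_div_sub_div_lt_one n m).le hn'.le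

end Nat

theorem tendsto_cast_div_div_self (m : ℕ) :
    Tendsto (fun n : ℕ => ((n / m : ℕ) : ℝ) / n) atTop (𝓝 (1 / m)) := by
  rw [tendsto_iff_norm_sub_tendsto_zero]
  refine squeeze_zero_norm' ?_ tendsto_one_div_atTop_nhds_zero_nat
  filter_upwards [eventually_gt_atTop 0] with n hn
  rw [norm_norm]
  exact Nat.abs_cast_div_div_sub_one_div_le hn m

theorem tendsto_sum_cast_div_div_self (s : Finset ℕ) :
    Tendsto (fun n : ℕ => ((∑ m ∈ s, n / m : ℕ) : ℝ) / n) atTop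
      (𝓝 (∑ m ∈ s, 1 / (m : ℝ))) := by
  simp only [Nat.cast_sum, sum_div]
  exact tendsto_finsetSum s fun m _ => tendsto_cast_div_div_self m

theorem tendsto_sqrt_sq_div_self :
    Tendsto (fun n : ℕ => ((Nat.sqrt n : ℕ) : ℝ) ^ 2 / n) atTop (𝓝 1) := by
  have hlower : Tendsto (fun n : ℕ => ((Nat.sqrt n : ℝ) / (Nat.sqrt n + 1)) ^ 2) atTop (𝓝 1) := by
    simpa using ((tendsto_natCast_div_add_atTop (1 : ℝ)).comp Nat.tendsto_sqrt_atTop).pow 2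
  refine tendsto_of_tendsto_of_tendsto_of_le_of_le' hlower tendsto_const_nhds ?_ ?_
  · filter_upwards [eventually_gt_atTop 0] with n hn
    have hlt : (n : ℝ) < (Nat.sqrt n + 1) ^ 2 := by exact_mod_cast Nat.lt_succ_sqrt' n
    rw [div_pow]
    exact div_le_div_of_nonneg_left (by positivity) (by positivity) hlt.le
  · exact Eventually.of_forall fun n =>
      div_le_one_of_le₀ (by exact_mod_cast Nat.sqrt_le' n) n.cast_nonneg

theorem tendsto_sum_Icc_sqrt_cast_div_div_sub_harmonic :
    Tendsto (fun n : ℕ =>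
        ((∑ m ∈ Icc 1 (Nat.sqrt n), n / m : ℕ) : ℝ) / n - harmonic (Nat.sqrt n))
      atTop (𝓝 0) := by
  refine squeeze_zero_norm' ?_ (tendsto_one_div_atTop_nhds_zero_nat.comp Nat.tendsto_sqrt_atTop)
  filter_upwards [eventually_gt_atTop 0] with n hn
  set s := Nat.sqrt n
  have hs : 0 < s := Nat.sqrt_pos.mpr hn
  have hss : (s : ℝ) * s ≤ n := by exact_mod_cast Nat.sqrt_le n
  rw [harmonic_eq_sum_Icc, Nat.cast_sum, sum_div, Rat.cast_sum, ← sum_sub_distrib]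
  calc ‖∑ m ∈ Icc 1 s, (((n / m : ℕ) : ℝ) / n - (((m : ℚ)⁻¹ : ℚ) : ℝ))‖
      ≤ ∑ m ∈ Icc 1 s, (1 : ℝ) / n := by
        refine norm_sum_le_of_le _ fun m _ => ?_
        simpa [Real.norm_eq_abs] using Nat.abs_cast_div_div_sub_one_div_le hn m
    _ = s / n := by simp [div_eq_mul_inv]
    _ ≤ 1 / s := by
        rw [div_le_div_iff₀ (by positivity) (by positivity)]
        linarith

theorem tendsto_sum_Icc_cast_div_div_sub_log :
    Tendsto (fun n : ℕ => ((∑ m ∈ Icc 1 n, n / m : ℕ) : ℝ) / n - log n) atTop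
      (𝓝 (2 * eulerMascheroniConstant - 1)) := by
  have hγ := tendsto_harmonic_sub_log.comp Nat.tendsto_sqrt_atTop
  have hlog := (continuousAt_log one_ne_zero).tendsto.comp tendsto_sqrt_sq_div_self
  have hlim := (((tendsto_sum_Icc_sqrt_cast_div_div_sub_harmonic.add hγ).const_mul 2).add
    hlog).sub tendsto_sqrt_sq_div_self
  rw [zero_add, log_one, add_zero] at hlim
  refine hlim.congr' ?_
  filter_upwards [eventually_gt_atTop 0] with n hn
  simp only [Function.comp_apply]
  set s := Nat.sqrt n
  have hs : 0 < s := Nat.sqrt_pos.mpr hn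
  have hhyperbola : ((∑ m ∈ Icc 1 n, n / m : ℕ) : ℝ) + s * s =
      2 * ((∑ m ∈ Icc 1 s, n / m : ℕ) : ℝ) := by
    exact_mod_cast Nat.sum_Icc_div_add_sqrt_mul_sqrt n
  have hlogs : log ((s : ℝ) ^ 2 / n) = 2 * log s - log n := by
    rw [log_div (by positivity) (by positivity), log_pow, Nat.cast_ofNat]
  rw [hlogs]
  field_simp
  linarith

theorem congruence_network_average_degree_general (r : ℕ) :
    Tendsto
      (fun N : ℕ =>
        ((∑ m ∈ Finset.Icc (r + 1) N, (N - r) / m : ℕ) : ℝ) / ((N : ℝ) - r)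
          - Real.log ((N : ℝ) - r))
      atTop
      (nhds (2 * Real.eulerMascheroniConstant - 1 - ∑ i ∈ Finset.Icc 1 r, (1 : ℝ) / i)) := by
  have hlim := (tendsto_sum_Icc_cast_div_div_sub_log.sub
    (tendsto_sum_cast_div_div_self (Icc 1 r))).comp (tendsto_sub_atTop_nat r)
  refine hlim.congr' ?_
  filter_upwards [eventually_ge_atTop r] with N hN
  have hsplit := Nat.sum_Icc_one_add_sum_Ioc (fun m => (N - r) / m) hN
  rw [Nat.sum_Icc_div_of_le (N.sub_le r), ← Icc_add_one_left_eq_Ioc] at hsplit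
  rw [Function.comp_apply, ← Nat.cast_sub hN, ← hsplit, Nat.cast_add, add_div]
  ring

/-- For fixed `r ≥ 1`, the average out-degree
`k̄(N) = (1/(N−r)) ∑_{m=r+1}^{N} ⌊(N−r)/m⌋` of the congruence network `G(r,N)`
satisfies `k̄(N) − log(N−r) → 2γ − 1 − ∑_{i=1}^{r} 1/i` as `N → ∞`, where `γ` is the
Euler–Mascheroni constant.  In particular the average degree grows logarithmically
with the network size. -/
theorem congruence_network_average_degree (r : ℕ) (hr : 1 ≤ r) :
    Tendsto
      (fun N : ℕ =>
        ((∑ m ∈ Finset.Icc (r + 1) N, (N - r) / m : ℕ) : ℝ) / ((N : ℝ) - r)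
          - Real.log ((N : ℝ) - r))
      atTop
      (nhds (2 * Real.eulerMascheroniConstant - 1 - ∑ i ∈ Finset.Icc 1 r, (1 : ℝ) / i)) :=
  congruence_network_average_degree_general r
end

section
/- Let r ≥ 1 and N ≥ 2r, let F be a field, and let A be any (N−r) × (N−r) matrix over F, with rows and columns indexed by the nodes r+1, ..., N of the congruence network G(r,N), such that the entry A_{j,i} is nonzero if and only if there is a directed edge from i to j in G(r,N) (i.e. i < j and j ≡ r (mod i)). Then rank(A) = N − 2r. In particular the rank does not depend on the values of the nonzero (link-weight) entries, so G(r,N) is strongly structurally controllable with exactly r driver nodes. -/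
/-!
A node `a` of `G(r,N)` with an out-edge `a → b` satisfies `a ∣ b - r` with `b - r ≥ a`, so
`a + r ≤ b ≤ N`: only the columns of the `N - 2r` nodes `a ≤ N - r` can be nonzero, which bounds
the rank from above. Conversely, for each such `a` the edge `a → a + r` is present, and the rows
`a + r` against the columns `a` form a lower triangular block with nonzero diagonal, hence of full
rank `N - 2r`.
-/

open Matrix Finset

theorem Matrix.rank_le_card_of_col_support_subset {m n F : Type*} [Field F] [Fintype m]
    [Fintype n] (A : Matrix m n F) (s : Finset n) (hz : ∀ i ∉ s, ∀ j, A j i = 0) :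
    A.rank ≤ #s := by
  rw [← rank_transpose]
  refine Aᵀ.rank_le_card_of_support_subset s fun i hi => ?_
  by_contra his
  exact hi (funext fun j => hz i his j)

def CongruenceEdge (r a b : ℕ) : Prop :=
  a < b ∧ b % a = r

theorem CongruenceEdge.add_le {r a b : ℕ} (h : CongruenceEdge r a b) : a + r ≤ b := by
  obtain ⟨hab, hmod⟩ := h
  rcases Nat.eq_zero_or_pos a with rfl | ha
  · rw [Nat.mod_zero] at hmod
    omega
  have hquot : a ≤ a * (b / a) := Nat.le_mul_of_pos_right a (Nat.div_pos hab.le ha)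
  have := Nat.div_add_mod b a
  omega

theorem congruenceEdge_self_add {r a : ℕ} (hr : 1 ≤ r) (hra : r < a) :
    CongruenceEdge r a (a + r) :=
  ⟨by omega, by rw [Nat.add_mod_left, Nat.mod_eq_of_lt hra]⟩

/-- Index `i : Fin n` stands for the node `r + 1 + i`. -/
def IsCongruenceCoupling {F : Type*} [Zero F] {n : ℕ} (r : ℕ) (A : Matrix (Fin n) (Fin n) F) :
    Prop :=
  ∀ i j : Fin n, A j i ≠ 0 ↔ CongruenceEdge r (r + 1 + (i : ℕ)) (r + 1 + (j : ℕ))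

namespace IsCongruenceCoupling

variable {F : Type*} {n r : ℕ}

theorem add_le_of_ne_zero [Zero F] {A : Matrix (Fin n) (Fin n) F} (hA : IsCongruenceCoupling r A)
    {i j : Fin n} (h : A j i ≠ 0) : (i : ℕ) + r ≤ j := by
  have := ((hA i j).mp h).add_le
  omega

theorem apply_ne_zero_of_eq_add [Zero F] {A : Matrix (Fin n) (Fin n) F}
    (hA : IsCongruenceCoupling r A) (hr : 1 ≤ r) {i j : Fin n} (hij : (j : ℕ) = i + r) :
    A j i ≠ 0 :=
  (hA i j).mpr (by rw [hij, ← add_assoc]; exact congruenceEdge_self_add hr (by omega))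

def pivotBlock (r : ℕ) (A : Matrix (Fin n) (Fin n) F) : Matrix (Fin (n - r)) (Fin (n - r)) F :=
  A.submatrix (fun k => ⟨k + r, by omega⟩) (Fin.castLE (by omega))

theorem pivotBlock_isLowerTriangular [Zero F] {A : Matrix (Fin n) (Fin n) F}
    (hA : IsCongruenceCoupling r A) : (pivotBlock r A).IsLowerTriangular := by
  intro k l hkl
  by_contra h
  have := hA.add_le_of_ne_zero h
  simp only [OrderDual.toDual_lt_toDual, Fin.lt_def, Fin.val_castLE] at hkl this
  omega

theorem det_pivotBlock_ne_zero [Field F] {A : Matrix (Fin n) (Fin n) F}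
    (hA : IsCongruenceCoupling r A) (hr : 1 ≤ r) : (pivotBlock r A).det ≠ 0 := by
  rw [det_of_isLowerTriangular _ hA.pivotBlock_isLowerTriangular]
  exact prod_ne_zero_iff.mpr fun k _ => hA.apply_ne_zero_of_eq_add hr rfl

theorem rank_le [Field F] {A : Matrix (Fin n) (Fin n) F} (hA : IsCongruenceCoupling r A) :
    A.rank ≤ n - r := by
  have hcols := A.rank_le_card_of_col_support_subset {i : Fin n | i < n - r} fun i hi j => by
    by_contra h
    have := hA.add_le_of_ne_zero h
    simp only [mem_filter, mem_univ, true_and] at hi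
    omega
  rwa [Fin.card_filter_val_lt, min_eq_right (Nat.sub_le n r)] at hcols

theorem le_rank [Field F] {A : Matrix (Fin n) (Fin n) F} (hA : IsCongruenceCoupling r A)
    (hr : 1 ≤ r) : n - r ≤ A.rank :=
  calc n - r = (pivotBlock r A).rank := by
        rw [rank_of_det_ne_zero (hA.det_pivotBlock_ne_zero hr), Fintype.card_fin]
    _ ≤ A.rank := rank_submatrix_le _ _ _

theorem rank_eq [Field F] {A : Matrix (Fin n) (Fin n) F} (hA : IsCongruenceCoupling r A)
    (hr : 1 ≤ r) : A.rank = n - r :=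
  hA.rank_le.antisymm (hA.le_rank hr)

end IsCongruenceCoupling

theorem congruence_network_coupling_rank_general (r N : ℕ) (hr : 1 ≤ r)
    (F : Type*) [Field F] (A : Matrix (Fin (N - r)) (Fin (N - r)) F)
    (hA : ∀ i j : Fin (N - r),
      A j i ≠ 0 ↔ (r + 1 + (i : ℕ) < r + 1 + (j : ℕ) ∧
        (r + 1 + (j : ℕ)) % (r + 1 + (i : ℕ)) = r)) :
    A.rank = N - 2 * r := by
  have hA : IsCongruenceCoupling r A := hA
  rw [hA.rank_eq hr]
  omega

/-- Let `r ≥ 1`, `N ≥ 2r`, `F` a field, and let `A` be any `(N−r) × (N−r)` matrix over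
`F` indexed by the nodes `r+1, …, N` of the congruence network `G(r,N)` (node `i` of the
index type `Fin (N−r)` represents the number `r+1+i`), with `A j i ≠ 0` iff there is an
edge from node `i` to node `j` (i.e. `i < j` and `j ≡ r (mod i)` as numbers).  Then
`rank A = N − 2r`, independently of the values of the nonzero entries: `G(r,N)` is
strongly structurally controllable with exactly `r` driver nodes. -/
theorem congruence_network_coupling_rank (r N : ℕ) (hr : 1 ≤ r) (hN : 2 * r ≤ N)
    (F : Type*) [Field F] (A : Matrix (Fin (N - r)) (Fin (N - r)) F)
    (hA : ∀ i j : Fin (N - r),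
      A j i ≠ 0 ↔ (r + 1 + (i : ℕ) < r + 1 + (j : ℕ) ∧
        (r + 1 + (j : ℕ)) % (r + 1 + (i : ℕ)) = r)) :
    A.rank = N - 2 * r :=
  congruence_network_coupling_rank_general r N hr F A hA
end

section
/- Let N ≥ 1, let F be a field, and let A be any N × N matrix over F, with rows and columns indexed by the nodes 1, ..., N of the divisibility network G(0,N), such that the entry A_{j,i} is nonzero if and only if there is a directed edge from i to j in G(0,N) (i.e. i < j and i ∣ j). Then rank(A) = ⌊N/2⌋. In particular one must control N − ⌊N/2⌋ = ⌈N/2⌉ driver nodes to fully control G(0,N). -/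
/-!
Node `k` of `G(0,N)` has a successor (e.g. `2k`) exactly when `2k ≤ N`, so only the first
`⌊N/2⌋` columns of `A` can be nonzero and `rank A ≤ ⌊N/2⌋`. Conversely, the rows of the
nodes `2, 4, …, 2⌊N/2⌋` restricted to the columns `1, …, ⌊N/2⌋` form a lower triangular
matrix with nonzero diagonal: `k ∣ 2m` with `k < 2m` forces `2k ≤ 2m`, i.e. `k ≤ m`.
-/

open Matrix
open scoped Finset

theorem Nat.two_mul_le_of_dvd_of_lt {a b : ℕ} (hdvd : a ∣ b) (hlt : a < b) : 2 * a ≤ b := by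
  obtain ⟨c, rfl⟩ := hdvd
  rcases c with _ | _ | c
  · omega
  · omega
  · nlinarith

namespace Matrix

variable {m n R : Type*} [Field R] [Fintype m] [Fintype n]

theorem rank_le_card_of_col_support_subset_s14 (A : Matrix m n R) (s : Finset n)
    (hz : Function.support A.col ⊆ s) : A.rank ≤ s.card := by
  rw [← rank_transpose]
  exact rank_le_card_of_support_subset Aᵀ s (by rwa [row_transpose])

theorem rank_eq_card_of_isLowerTriangular [LinearOrder m] (A : Matrix m m R)
    (hA : A.IsLowerTriangular) (hd : ∀ i, A i i ≠ 0) : A.rank = Fintype.card m := by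
  classical
  simpa using rank_mul_eq_right_of_isLowerTriangular A (1 : Matrix m m R) hA hd

end Matrix

section DivisibilityNetwork

variable {N : ℕ} {F : Type*} [Field F] {A : Matrix (Fin N) (Fin N) F}

theorem rank_le_half_of_divisibility_support
    (hA : ∀ i j : Fin N,
      A j i ≠ 0 → (i : ℕ) + 1 < (j : ℕ) + 1 ∧ ((i : ℕ) + 1) ∣ ((j : ℕ) + 1)) :
    A.rank ≤ N / 2 := by
  classical
  let firstHalf : Finset (Fin N) := {i | (i : ℕ) < N / 2}
  have hcol : Function.support A.col ⊆ firstHalf := by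
    intro i hi
    obtain ⟨j, hj⟩ := Function.ne_iff.mp hi
    obtain ⟨hlt, hdvd⟩ := hA i j hj
    have := Nat.two_mul_le_of_dvd_of_lt hdvd hlt
    simp only [firstHalf, Finset.coe_filter, Finset.mem_univ, true_and, Set.mem_ofPred_eq]
    omega
  calc A.rank ≤ #firstHalf := rank_le_card_of_col_support_subset_s14 A firstHalf hcol
    _ = N / 2 := by rw [Fin.card_filter_val_lt]; omega

theorem half_le_rank_of_divisibility_support
    (hA : ∀ i j : Fin N,
      A j i ≠ 0 ↔ ((i : ℕ) + 1 < (j : ℕ) + 1 ∧ ((i : ℕ) + 1) ∣ ((j : ℕ) + 1))) :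
    N / 2 ≤ A.rank := by
  let evens : Fin (N / 2) → Fin N := fun k => ⟨2 * k + 1, by omega⟩
  let firstHalf : Fin (N / 2) → Fin N := fun k => ⟨k, by omega⟩
  have hlower : (A.submatrix evens firstHalf).IsLowerTriangular := by
    intro k l (hkl : k < l)
    by_contra h
    obtain ⟨hlt, hdvd⟩ := (hA _ _).mp h
    have := Nat.two_mul_le_of_dvd_of_lt hdvd hlt
    simp only [evens, firstHalf] at this
    omega
  have hdiag : ∀ k, A.submatrix evens firstHalf k k ≠ 0 := fun k =>
    (hA _ _).mpr
      ⟨by simp only [evens, firstHalf]; omega, ⟨2, by simp only [evens, firstHalf]; ring⟩⟩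
  calc N / 2 = (A.submatrix evens firstHalf).rank := by
        rw [rank_eq_card_of_isLowerTriangular _ hlower hdiag, Fintype.card_fin]
    _ ≤ A.rank := rank_submatrix_le A evens firstHalf

end DivisibilityNetwork

theorem divisibility_network_coupling_rank_general (N : ℕ)
    (F : Type*) [Field F] (A : Matrix (Fin N) (Fin N) F)
    (hA : ∀ i j : Fin N,
      A j i ≠ 0 ↔ ((i : ℕ) + 1 < (j : ℕ) + 1 ∧ ((i : ℕ) + 1) ∣ ((j : ℕ) + 1))) :
    A.rank = N / 2 ∧ N - A.rank = (N + 1) / 2 := by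
  have hrank : A.rank = N / 2 :=
    le_antisymm (rank_le_half_of_divisibility_support fun i j h => (hA i j).mp h)
      (half_le_rank_of_divisibility_support hA)
  exact ⟨hrank, by omega⟩

/-- Let `N ≥ 1`, `F` a field, and let `A` be any `N × N` matrix over `F` indexed by the
nodes `1, …, N` of the divisibility network `G(0,N)` (index `i : Fin N` represents the
number `i+1`), with `A j i ≠ 0` iff there is an edge from node `i` to node `j`
(i.e. `i < j` and `i ∣ j` as numbers).  Then `rank A = ⌊N/2⌋`; in particular one must
control `N − ⌊N/2⌋ = ⌈N/2⌉` driver nodes to fully control `G(0,N)`. -/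
theorem divisibility_network_coupling_rank (N : ℕ) (hN : 1 ≤ N)
    (F : Type*) [Field F] (A : Matrix (Fin N) (Fin N) F)
    (hA : ∀ i j : Fin N,
      A j i ≠ 0 ↔ ((i : ℕ) + 1 < (j : ℕ) + 1 ∧ ((i : ℕ) + 1) ∣ ((j : ℕ) + 1))) :
    A.rank = N / 2 ∧ N - A.rank = (N + 1) / 2 :=
  divisibility_network_coupling_rank_general N F A hA
end

section
/- Let r ≥ 1 and N ≥ 2r, let F be a field, and let A be any (N−r) × (N−r) matrix over F, indexed by the nodes r+1, ..., N of the congruence network G(r,N), whose entry A_{j,i} is nonzero if and only if there is an edge from i to j in G(r,N). Let B be the (N−r) × r matrix whose l-th column is the standard basis vector supported on the node r+l (for l = 1, ..., r). Then the augmented matrix [A B] has full row rank N − r. That is, the exact-controllability condition rank[−A, B] = N − r holds when the r input signals are imposed on the r smallest nodes r+1, ..., 2r (the chain roots), for any choice of nonzero link weights. -/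
/-!
For each node pick a column of `[A B]` that vanishes in the rows of the smaller nodes and not in
the row of the node itself. For a root `r + l` this is the `l`-th input column. For a node
`n > 2r` it is the column of the node `n - r`: as `n - r > r`, the targets of `n - r` are the
numbers `q (n - r) + r` with `q ≥ 1`, the least of which is `n`. The chosen columns form a lower
triangular square submatrix with nonzero diagonal.
-/

open Matrix

theorem Nat.add_mod_le_of_lt {m n : ℕ} (h : m < n) : m + n % m ≤ n := by
  rcases Nat.eq_zero_or_pos m with rfl | hm
  · simp
  have hq : 1 ≤ n / m := (Nat.one_le_div_iff hm).2 h.le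
  have := Nat.mod_add_div n m
  nlinarith

namespace Matrix

variable {m ι F : Type*} [Fintype m] [LinearOrder m] [Fintype ι] [Field F]

theorem rank_eq_card_of_triangular_cols (M : Matrix m ι F) (c : m → ι)
    (hdiag : ∀ j, M j (c j) ≠ 0) (htri : ∀ j k, M k (c j) ≠ 0 → j ≤ k) :
    M.rank = Fintype.card m := by
  classical
  have hlower : (M.submatrix id c).IsLowerTriangular := fun k j hkj =>
    by_contra fun h => (not_le.2 hkj) (htri j k h)
  have hunit : IsUnit (M.submatrix id c) := by
    rw [isUnit_iff_isUnit_det, det_of_isLowerTriangular _ hlower]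
    exact (Finset.prod_ne_zero_iff.2 fun j _ => hdiag j).isUnit
  refine le_antisymm M.rank_le_card_height ?_
  calc Fintype.card m = (M.submatrix id c).rank := (rank_of_isUnit _ hunit).symm
    _ ≤ M.rank := rank_submatrix_le M id c

end Matrix

theorem rank_fromCols_eq_of_congruence_pattern {r N : ℕ} (hr : 1 ≤ r) {F : Type*} [Field F]
    (A : Matrix (Fin (N - r)) (Fin (N - r)) F)
    (hA : ∀ i j : Fin (N - r),
      A j i ≠ 0 ↔ (r + 1 + (i : ℕ) < r + 1 + (j : ℕ) ∧
        (r + 1 + (j : ℕ)) % (r + 1 + (i : ℕ)) = r))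
    (B : Matrix (Fin (N - r)) (Fin r) F)
    (hB : ∀ (j : Fin (N - r)) (l : Fin r), B j l = if (j : ℕ) = (l : ℕ) then 1 else 0) :
    (fromCols A B).rank = N - r := by
  let c : Fin (N - r) → Fin (N - r) ⊕ Fin r := fun j =>
    if h : (j : ℕ) < r then .inr ⟨j, h⟩ else .inl ⟨j - r, by omega⟩
  rw [rank_eq_card_of_triangular_cols _ c, Fintype.card_fin]
  · intro j
    by_cases h : (j : ℕ) < r
    · simp [c, h, hB]
    · simp only [c, h, dite_false, fromCols_apply_inl, hA]
      refine ⟨by omega, ?_⟩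
      rw [show r + 1 + (j : ℕ) = r + (r + 1 + (j - r)) by omega, Nat.add_mod_right,
        Nat.mod_eq_of_lt (by omega)]
  · intro j k hk
    by_cases h : (j : ℕ) < r
    · simp only [c, h, dite_true, fromCols_apply_inr, hB] at hk
      exact (Fin.ext (by simpa using hk)).ge
    · simp only [c, h, dite_false, fromCols_apply_inl, hA] at hk
      have := Nat.add_mod_le_of_lt hk.1
      rw [hk.2] at this
      change (j : ℕ) ≤ k
      omega

theorem congruence_network_exact_controllability_general (r N : ℕ) (hr : 1 ≤ r)
    (F : Type*) [Field F] (A : Matrix (Fin (N - r)) (Fin (N - r)) F)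
    (hA : ∀ i j : Fin (N - r),
      A j i ≠ 0 ↔ (r + 1 + (i : ℕ) < r + 1 + (j : ℕ) ∧
        (r + 1 + (j : ℕ)) % (r + 1 + (i : ℕ)) = r))
    (B : Matrix (Fin (N - r)) (Fin r) F)
    (hB : ∀ (j : Fin (N - r)) (l : Fin r), B j l = if (j : ℕ) = (l : ℕ) then 1 else 0) :
    (Matrix.fromCols A B).rank = N - r ∧ (Matrix.fromCols (-A) B).rank = N - r :=
  ⟨rank_fromCols_eq_of_congruence_pattern hr A hA B hB,
    rank_fromCols_eq_of_congruence_pattern hr (-A) (fun i j => by simpa using hA i j) B hB⟩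

/-- Let `r ≥ 1`, `N ≥ 2r`, `F` a field, `A` any `(N−r) × (N−r)` matrix over `F` indexed
by the nodes `r+1, …, N` of the congruence network `G(r,N)` (index `i : Fin (N−r)`
represents the number `r+1+i`), with `A j i ≠ 0` iff there is an edge from node `i` to
node `j`.  Let `B` be the `(N−r) × r` matrix whose `l`-th column is the standard basis
vector supported on the node `r+l` (0-based: the node represented by index `l`).  Then
the augmented matrices `[A B]` and `[−A B]` have full row rank `N − r`: the
exact-controllability condition holds when the `r` inputs drive the chain roots
`r+1, …, 2r`, for any choice of nonzero link weights. -/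
theorem congruence_network_exact_controllability (r N : ℕ) (hr : 1 ≤ r) (hN : 2 * r ≤ N)
    (F : Type*) [Field F] (A : Matrix (Fin (N - r)) (Fin (N - r)) F)
    (hA : ∀ i j : Fin (N - r),
      A j i ≠ 0 ↔ (r + 1 + (i : ℕ) < r + 1 + (j : ℕ) ∧
        (r + 1 + (j : ℕ)) % (r + 1 + (i : ℕ)) = r))
    (B : Matrix (Fin (N - r)) (Fin r) F)
    (hB : ∀ (j : Fin (N - r)) (l : Fin r), B j l = if (j : ℕ) = (l : ℕ) then 1 else 0) :
    (Matrix.fromCols A B).rank = N - r ∧ (Matrix.fromCols (-A) B).rank = N - r :=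
  congruence_network_exact_controllability_general r N hr F A hA B hB
end
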